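/- arXiv:2505.22174 — 4 statements merged into one kernel-verified Lean document; each statement's English description precedes it below -/
import Mathlib

section
/- For every real ε > 0 there exists N ∈ ℕ such that for every integer n ≥ N, setting α := 2n² + 2n, every deterministic online allocation algorithm F for n agents admits a 2-value stream v with v t i ∈ {1, α} for all t, i, and a time step T ≥ 1, such that the allocation induced by F at the end of time step T is not (1/√(2α) + ε)-MMS; that is, some agent i has v_i(A_i^T) < (1/√(2α) + ε) · μ_i^n(T). -/
open Finset

noncomputable section

/-- The agent to whom good `t` is assigned by the deterministic online algorithm `F`
on stream `v`: `σ(t) = F [v 0, …, v t]`. -/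
def alloc (n : ℕ) (F : List (Fin n → NNReal) → Fin n) (v : ℕ → Fin n → NNReal) (t : ℕ) : Fin n :=
  F ((List.range (t + 1)).map v)

/-- The bundle of agent `i` at the end of time step `T`. -/
def bundle (n : ℕ) (F : List (Fin n → NNReal) → Fin n) (v : ℕ → Fin n → NNReal)
    (i : Fin n) (T : ℕ) : Finset ℕ :=
  (Finset.range T).filter fun t => alloc n F v t = i

/-- The (real) value of the bundle `B` for agent `i`. -/
def bval (n : ℕ) (v : ℕ → Fin n → NNReal) (i : Fin n) (B : Finset ℕ) : ℝ :=
  ∑ t ∈ B, (v t i : ℝ)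

/-- The `n`-agent maximin share of the additive valuation `w` over the finite set `S` of goods. -/
def mmsN (n : ℕ) (S : Finset ℕ) (w : ℕ → ℝ) : ℝ :=
  sSup { x : ℝ | ∃ P : ℕ → Fin n,
    x = ⨅ j : Fin n, ∑ t ∈ S.filter (fun t => P t = j), w t }

/-!
The adversary first sends `α` goods that every agent values at `1`, then goods that every agent
values at `α`. At time `α + (n - k)` at most `n - k` agents hold a big good, so at least `k` agents
hold only small goods, while every maximin share is at least `⌊α / k⌋` (deal the small goods
round-robin into `k` bundles and give each big good its own bundle). A `ρ`-MMS algorithm must therefore give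
each of these agents `ρ ⌊α / k⌋` small goods. The sets of such agents grow with `k`, so one can pick
distinct agents for `k = 1, …, K`, and counting their small goods gives `ρ (α H_K - K) ≤ α`. This
fails once `ρ ≥ ε`, `H_K ≥ 2 / ε` and `α ≥ n > ε K`.
-/

lemma le_mmsN_of_forall_le_sum {n : ℕ} [NeZero n] {S : Finset ℕ} {w : ℕ → ℝ} {x : ℝ}
    (hw : ∀ t ∈ S, 0 ≤ w t) (P : ℕ → Fin n)
    (hP : ∀ j, x ≤ ∑ t ∈ S.filter (fun t => P t = j), w t) : x ≤ mmsN n S w := by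
  have hbdd : BddAbove {y : ℝ | ∃ P : ℕ → Fin n,
      y = ⨅ j : Fin n, ∑ t ∈ S.filter (fun t => P t = j), w t} := by
    refine ⟨∑ t ∈ S, w t, ?_⟩
    rintro _ ⟨Q, rfl⟩
    exact (ciInf_le (Set.finite_range _).bddBelow 0).trans
      (sum_le_sum_of_subset_of_nonneg (filter_subset _ _) fun t ht _ => hw t ht)
  exact (le_ciInf hP).trans (le_csSup hbdd ⟨P, rfl⟩)

theorem exists_card_eq_sum_range_le {ι M : Type*} [DecidableEq ι] [AddCommMonoid M]
    [PartialOrder M] [IsOrderedAddMonoid M] {S : ℕ → Finset ι} (hS : Monotone S)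
    {b : ℕ → M} {f : ι → M} {K : ℕ} (hcard : ∀ k < K, k < #(S k))
    (hb : ∀ k < K, ∀ i ∈ S k, b k ≤ f i) :
    ∃ B ⊆ S K, #B = K ∧ ∑ k ∈ range K, b k ≤ ∑ i ∈ B, f i := by
  induction K with
  | zero => exact ⟨∅, empty_subset _, rfl, by simp⟩
  | succ K ih =>
    obtain ⟨B, hBS, hBK, hsum⟩ :=
      ih (fun k hk => hcard k (by omega)) (fun k hk => hb k (by omega))
    obtain ⟨i, hiS, hiB⟩ : ∃ i ∈ S K, i ∉ B :=
      exists_mem_notMem_of_card_lt_card (hBK ▸ hcard K K.lt_succ_self)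
    refine ⟨insert i B, insert_subset (hS K.le_succ hiS) (hBS.trans (hS K.le_succ)),
      by rw [card_insert_of_notMem hiB, hBK], ?_⟩
    rw [sum_range_succ, sum_insert hiB, add_comm (f i)]
    exact add_le_add hsum (hb K K.lt_succ_self i hiS)

lemma sub_le_sum_range_div (m K : ℕ) :
    (m : ℝ) * ∑ k ∈ range K, 1 / (k + 1 : ℝ) - K ≤ ∑ k ∈ range K, ((m / (k + 1) : ℕ) : ℝ) := by
  have hterm (k : ℕ) : (m : ℝ) / (k + 1) - 1 ≤ ((m / (k + 1) : ℕ) : ℝ) := by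
    have := Nat.sub_one_lt_floor ((m : ℝ) / ((k + 1 : ℕ) : ℝ))
    rw [Nat.floor_div_eq_div] at this
    push_cast at this
    exact this.le
  calc (m : ℝ) * ∑ k ∈ range K, 1 / (k + 1 : ℝ) - K
      = ∑ k ∈ range K, ((m : ℝ) / (k + 1) - 1) := by
        simp [mul_sum, sum_sub_distrib, div_eq_mul_inv]
    _ ≤ _ := sum_le_sum fun k _ => hterm k

lemma bval_eq_card {n : ℕ} {v : ℕ → Fin n → NNReal} {i : Fin n} {B : Finset ℕ}
    (h : ∀ t ∈ B, v t i = 1) : bval n v i B = #B := by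
  rw [bval, sum_congr rfl fun t ht => by rw [h t ht, NNReal.coe_one], sum_const, nsmul_one]

section Allocation

variable {n : ℕ} (F : List (Fin n → NNReal) → Fin n) (v : ℕ → Fin n → NNReal)

lemma sum_card_bundle (T : ℕ) : ∑ i, #(bundle n F v i T) = T := by
  simpa [bundle] using (card_eq_sum_card_fiberwise (f := alloc n F v) (s := range T)
    (t := univ) fun _ _ => mem_univ _).symm

lemma bundle_add_of_forall_ne {i : Fin n} {T m : ℕ}
    (h : ∀ t ∈ Ico T (T + m), alloc n F v t ≠ i) :
    bundle n F v i (T + m) = bundle n F v i T := by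
  ext t
  simp only [bundle, mem_filter, mem_range]
  constructor
  · rintro ⟨ht, hti⟩
    exact ⟨not_le.1 fun hT => h t (mem_Ico.2 ⟨hT, ht⟩) hti, hti⟩
  · rintro ⟨ht, hti⟩
    exact ⟨by omega, hti⟩

lemma le_card_compl_image_alloc (T m : ℕ) : n - m ≤ #((Ico T (T + m)).image (alloc n F v))ᶜ := by
  have := card_image_le (s := Ico T (T + m)) (f := alloc n F v)
  rw [Nat.card_Ico] at this
  rw [card_compl, Fintype.card_fin]
  omega

end Allocation

def alpha (n : ℕ) : ℕ := 2 * n ^ 2 + 2 * n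

def adversary (n : ℕ) : ℕ → Fin n → NNReal := fun t _ => if t < alpha n then 1 else alpha n

lemma le_alpha (n : ℕ) : n ≤ alpha n := by
  unfold alpha
  nlinarith

lemma one_le_adversary {n : ℕ} (hn : 0 < n) (t : ℕ) (i : Fin n) : 1 ≤ adversary n t i := by
  unfold adversary
  split_ifs
  · exact le_rfl
  · exact_mod_cast hn.trans_le (le_alpha n)

lemma adversary_eq_one_or_eq (n t : ℕ) (i : Fin n) :
    adversary n t i = 1 ∨ adversary n t i = ((2 * n ^ 2 + 2 * n : ℕ) : NNReal) := by
  unfold adversary alpha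
  split_ifs <;> simp

lemma div_le_mmsN_adversary {n k : ℕ} (hk : 0 < k) (hkn : k ≤ n) (i : Fin n) :
    ((alpha n / k : ℕ) : ℝ) ≤
      mmsN n (range (alpha n + (n - k))) (fun t => (adversary n t i : ℝ)) := by
  have : NeZero n := ⟨by omega⟩
  set α := alpha n
  -- small good `t` goes to agent `t % k`, the `j`-th big good to agent `k + j`
  let P : ℕ → Fin n := fun t =>
    if t < α then ⟨t % k, (Nat.mod_lt t hk).trans_le hkn⟩
    else if h : k + (t - α) < n then ⟨k + (t - α), h⟩ else 0
  refine le_mmsN_of_forall_le_sum (fun t _ => NNReal.coe_nonneg _) P fun j => ?_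
  rcases lt_or_ge (j : ℕ) k with hj | hj
  · have hmaps : Set.MapsTo (fun m => m * k + j) (range (α / k))
        ((range (α + (n - k))).filter fun t => P t = j) := by
      intro m hm
      have hlt : m * k + j < α := by
        have h1 := Nat.div_mul_le_self α k
        have h2 : (m + 1) * k ≤ α / k * k := Nat.mul_le_mul_right _ (mem_range.1 hm)
        nlinarith
      simp only [coe_filter, mem_range, Set.mem_ofPred_eq, P, hlt, if_true]
      exact ⟨by omega, Fin.ext (by simp [Nat.mod_eq_of_lt hj])⟩
    have hinj : Set.InjOn (fun m => m * k + j) (range (α / k)) := fun a _ b _ hab => by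
      simpa [hk.ne'] using hab
    calc ((α / k : ℕ) : ℝ) ≤ #((range (α + (n - k))).filter fun t => P t = j) :=
          Nat.cast_le.2 (by simpa using card_le_card_of_injOn _ hmaps hinj)
      _ ≤ _ := by
        simpa using card_nsmul_le_sum _ _ (1 : ℝ) fun t _ =>
          NNReal.one_le_coe.2 (one_le_adversary (by omega) t i)
  · have hmem : α + (j - k) ∈ (range (α + (n - k))).filter fun t => P t = j := by
      have hjn := j.isLt
      simp only [mem_filter, mem_range, P]
      refine ⟨by omega, ?_⟩
      rw [if_neg (by omega), dif_pos (by omega)]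
      exact Fin.ext (by simp; omega)
    calc ((α / k : ℕ) : ℝ) ≤ α := Nat.cast_le.2 (Nat.div_le_self _ _)
      _ = adversary n (α + (j - k)) i := by simp [adversary, α]
      _ ≤ _ := single_le_sum (f := fun t => (adversary n t i : ℝ))
          (fun _ _ => NNReal.coe_nonneg _) hmem

lemma bval_bundle_alpha_adversary {n : ℕ} (F : List (Fin n → NNReal) → Fin n) (i : Fin n) :
    bval n (adversary n) i (bundle n F (adversary n) i (alpha n)) =
      #(bundle n F (adversary n) i (alpha n)) :=
  bval_eq_card fun t ht => by
    simp [adversary, mem_range.1 (mem_filter.1 ht).1]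

theorem mul_sum_div_le_alpha_of_forall_mms {n K : ℕ} (hKn : K ≤ n)
    (F : List (Fin n → NNReal) → Fin n) {c : ℝ} (hc : 0 ≤ c)
    (hMMS : ∀ T, 1 ≤ T → ∀ i, c * mmsN n (range T) (fun t => (adversary n t i : ℝ)) ≤
      bval n (adversary n) i (bundle n F (adversary n) i T)) :
    c * ∑ k ∈ range K, ((alpha n / (k + 1) : ℕ) : ℝ) ≤ alpha n := by
  set α := alpha n
  set σ := alloc n F (adversary n)
  let S : ℕ → Finset (Fin n) := fun k => ((Ico α (α + (n - (k + 1)))).image σ)ᶜ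
  have hS : Monotone S := fun k l hkl =>
    compl_subset_compl.2 (image_subset_image (Ico_subset_Ico le_rfl (by omega)))
  have hcard : ∀ k < K, k < #(S k) := fun k hk => by
    have : n - (n - (k + 1)) ≤ #(S k) := le_card_compl_image_alloc F (adversary n) α _
    omega
  have hb : ∀ k < K, ∀ i ∈ S k,
      c * ((α / (k + 1) : ℕ) : ℝ) ≤ (#(bundle n F (adversary n) i α) : ℝ) := by
    intro k hk i hi
    have hfree : ∀ t ∈ Ico α (α + (n - (k + 1))), σ t ≠ i := by
      simpa [S] using hi
    have hα : n ≤ α := le_alpha n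
    calc c * ((α / (k + 1) : ℕ) : ℝ)
        ≤ c * mmsN n (range (α + (n - (k + 1)))) (fun t => (adversary n t i : ℝ)) :=
          mul_le_mul_of_nonneg_left (div_le_mmsN_adversary k.succ_pos (by omega) i) hc
      _ ≤ bval n (adversary n) i (bundle n F (adversary n) i (α + (n - (k + 1)))) :=
          hMMS _ (by omega) i
      _ = #(bundle n F (adversary n) i α) := by
          rw [bundle_add_of_forall_ne F _ hfree, bval_bundle_alpha_adversary]
  obtain ⟨B, -, -, hB⟩ := exists_card_eq_sum_range_le hS hcard hb
  calc c * ∑ k ∈ range K, ((α / (k + 1) : ℕ) : ℝ)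
      = ∑ k ∈ range K, c * ((α / (k + 1) : ℕ) : ℝ) := mul_sum _ _ _
    _ ≤ ∑ i ∈ B, (#(bundle n F (adversary n) i α) : ℝ) := hB
    _ ≤ ∑ i, (#(bundle n F (adversary n) i α) : ℝ) :=
        sum_le_univ_sum_of_nonneg fun _ => Nat.cast_nonneg _
    _ = α := by exact_mod_cast sum_card_bundle F (adversary n) α

/-- For every `ε > 0` there is `N` such that for every `n ≥ N`, with `α := 2n² + 2n`, every
deterministic online allocation algorithm for `n` agents admits a `2`-value stream with values
in `{1, α}` and a time step `T ≥ 1` at the end of which the allocation is not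
`(1/√(2α) + ε)`-MMS. -/
theorem statement2 (ε : ℝ) (hε : 0 < ε) :
    ∃ N : ℕ, ∀ n : ℕ, N ≤ n →
      ∀ F : List (Fin n → NNReal) → Fin n,
        ∃ v : ℕ → Fin n → NNReal,
          (∀ (t : ℕ) (i : Fin n), v t i = 1 ∨ v t i = ((2 * n ^ 2 + 2 * n : ℕ) : NNReal)) ∧
          ∃ T : ℕ, 1 ≤ T ∧
            ∃ i : Fin n,
              bval n v i (bundle n F v i T) <
                (1 / Real.sqrt (2 * ((2 * n ^ 2 + 2 * n : ℕ) : ℝ)) + ε) *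
                  mmsN n (Finset.range T) (fun t => (v t i : ℝ)) := by
  obtain ⟨K, hK⟩ : ∃ K : ℕ, 2 / ε ≤ ∑ k ∈ range K, 1 / (k + 1 : ℝ) :=
    (Real.tendsto_sum_range_one_div_nat_succ_atTop.eventually_ge_atTop _).exists
  refine ⟨max K (⌊ε * K⌋₊ + 1), fun n hn F => ⟨adversary n, adversary_eq_one_or_eq n, ?_⟩⟩
  by_contra! hMMS
  set c := 1 / Real.sqrt (2 * ((2 * n ^ 2 + 2 * n : ℕ) : ℝ)) + ε
  have hεc : ε ≤ c := le_add_of_nonneg_left (by positivity)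
  have hεK : ε * K < n :=
    (Nat.lt_floor_add_one _).trans_le (by exact_mod_cast le_of_max_le_right hn)
  have hnα : (n : ℝ) ≤ alpha n := by exact_mod_cast le_alpha n
  have hbound := mul_sum_div_le_alpha_of_forall_mms (le_of_max_le_left hn) F
    (hε.le.trans hεc) hMMS
  have hsum := sub_le_sum_range_div (alpha n) K
  have : 2 * (alpha n : ℝ) - ε * K ≤ alpha n := calc
    2 * (alpha n : ℝ) - ε * K = ε * (alpha n * (2 / ε) - K) := by field_simp
    _ ≤ ε * (alpha n * ∑ k ∈ range K, 1 / (k + 1 : ℝ) - K) := by gcongr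
    _ ≤ ε * ∑ k ∈ range K, ((alpha n / (k + 1) : ℕ) : ℝ) := by gcongr
    _ ≤ c * ∑ k ∈ range K, ((alpha n / (k + 1) : ℕ) : ℝ) := by gcongr
    _ ≤ alpha n := hbound
  linarith

end
end

section
/- For every integer n ≥ 1 and all α, β : Fin n → ℝ≥0 with 0 < β i ≤ α i for every i, there exists a deterministic online allocation algorithm with foresight n−1 such that for every personalized 2-value stream v with parameters α, β and every positive integer λ, there exists T₀ ∈ ℕ such that for every time step T ≥ T₀ the induced allocation is (λ/(λ+2))-EF, (λ/(λ+1))-EF1, and (λ/(λ+2))-PROP. -/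
open Finset

noncomputable section

/-- The agent to whom good `t` is assigned by the deterministic online algorithm `F` with
foresight `ℓ` on stream `v`: `σ(t) = F [v 0, …, v (t+ℓ)]`. -/
def allocF (n ℓ : ℕ) (F : List (Fin n → NNReal) → Fin n) (v : ℕ → Fin n → NNReal)
    (t : ℕ) : Fin n :=
  F ((List.range (t + ℓ + 1)).map v)

/-- The bundle of agent `i` at the end of time step `T`. -/
def bundleF (n ℓ : ℕ) (F : List (Fin n → NNReal) → Fin n) (v : ℕ → Fin n → NNReal)
    (i : Fin n) (T : ℕ) : Finset ℕ :=
  (Finset.range T).filter fun t => allocF n ℓ F v t = i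

/-!
Assign each good by round robin among the goods with the same value vector (its *type*), so
that the `k`-th good of a type goes to agent `k mod n`; no foresight is needed. In each type
every bundle has at most one good more than any other, so with the finite set of possible types
`𝒯 ⊆ ∏ᵢ {αᵢ, βᵢ}` agent `i` values any bundle at most `Cᵢ = ∑_{w ∈ 𝒯} wᵢ` above her own. Her own
bundle is then worth at least `T βᵢ / n - Cᵢ`, which eventually exceeds `λ Cᵢ`, and
`vᵢ(Aᵢ) ≥ λ Cᵢ` together with `vᵢ(Aⱼ) ≤ vᵢ(Aᵢ) + Cᵢ` already gives `λ/(λ+1)`-EF, hence all three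
bounds (EF1 with `X = ∅`).
-/

open Filter

lemma Nat.count_modEq_le_count_modEq_add_one {r : ℕ} (hr : 0 < r) (b i j : ℕ) :
    b.count (· ≡ j [MOD r]) ≤ b.count (· ≡ i [MOD r]) + 1 := by
  rw [Nat.count_modEq_card b hr, Nat.count_modEq_card b hr]
  split_ifs <;> omega

lemma Nat.card_filter_and_count (p q : ℕ → Prop) [DecidablePred p] [DecidablePred q] (T : ℕ) :
    #{t ∈ range T | p t ∧ q (Nat.count p t)} = (Nat.count p T).count q := by
  induction T with
  | zero => simp
  | succ T ih =>
    rw [range_add_one, filter_insert, Nat.count_succ p]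
    by_cases hp : p T
    · by_cases hq : q (Nat.count p T)
      · rw [if_pos ⟨hp, hq⟩, card_insert_of_notMem (by simp), ih, if_pos hp, Nat.count_succ,
          if_pos hq]
      · rw [if_neg (by tauto), ih, if_pos hp, Nat.count_succ, if_neg hq, add_zero]
    · rw [if_neg (by tauto), ih, if_neg hp, add_zero]

section TypeRank

variable {ι : Type*} [DecidableEq ι]

def typeRank (v : ℕ → ι) (t : ℕ) : ℕ := Nat.count (fun s => v s = v t) t

lemma typeRank_congr {v v' : ℕ → ι} {t : ℕ} (h : ∀ s ≤ t, v s = v' s) :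
    typeRank v t = typeRank v' t := by
  simp only [typeRank, Nat.count_eq_card_filter_range]
  refine congrArg card (filter_congr fun s hs => ?_)
  rw [h s (mem_range.1 hs).le, h t le_rfl]

lemma card_filter_typeRank (v : ℕ → ι) (w : ι) (q : ℕ → Prop) [DecidablePred q] (T : ℕ) :
    #{t ∈ range T | v t = w ∧ q (typeRank v t)} = (Nat.count (v · = w) T).count q := by
  rw [← Nat.card_filter_and_count]
  refine congrArg card (filter_congr fun t _ => ?_)
  constructor <;> rintro ⟨rfl, h⟩ <;> exact ⟨rfl, h⟩

lemma card_filter_typeRank_mod_le {n : ℕ} [NeZero n] (v : ℕ → ι) (w : ι) (i j : Fin n) (T : ℕ) :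
    #{t ∈ range T | v t = w ∧ Fin.ofNat n (typeRank v t) = j} ≤
      #{t ∈ range T | v t = w ∧ Fin.ofNat n (typeRank v t) = i} + 1 := by
  have hmod : ∀ (k : Fin n) (m : ℕ), Fin.ofNat n m = k ↔ m ≡ k [MOD n] := fun k m => by
    rw [Fin.ext_iff, Fin.val_ofNat, Nat.ModEq, Nat.mod_eq_of_lt k.isLt]
  simp only [hmod]
  rw [card_filter_typeRank v w (· ≡ j [MOD n]), card_filter_typeRank v w (· ≡ i [MOD n])]
  exact Nat.count_modEq_le_count_modEq_add_one (NeZero.pos n) _ _ _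

end TypeRank

section Allocation

variable {n : ℕ} {v : ℕ → Fin n → NNReal}

lemma bval_nonneg (i : Fin n) (B : Finset ℕ) : 0 ≤ bval n v i B :=
  sum_nonneg fun _ _ => NNReal.coe_nonneg _

lemma sum_bval_bundleF (ℓ : ℕ) (F : List (Fin n → NNReal) → Fin n) (i : Fin n) (T : ℕ) :
    ∑ j, bval n v i (bundleF n ℓ F v j T) = ∑ t ∈ range T, (v t i : ℝ) :=
  sum_fiberwise _ _ _

lemma bval_bundleF_eq_sum_types {𝒯 : Finset (Fin n → NNReal)} (h𝒯 : ∀ t, v t ∈ 𝒯) (ℓ : ℕ)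
    (F : List (Fin n → NNReal) → Fin n) (i j : Fin n) (T : ℕ) :
    bval n v i (bundleF n ℓ F v j T) =
      ∑ w ∈ 𝒯, (#{t ∈ range T | v t = w ∧ allocF n ℓ F v t = j} : ℝ) * (w i : ℝ) := by
  rw [bval, ← sum_fiberwise_of_maps_to (fun t _ => h𝒯 t)]
  refine sum_congr rfl fun w _ => ?_
  rw [bundleF, filter_filter, sum_congr rfl fun t ht => by rw [(mem_filter.1 ht).2.2],
    sum_const, nsmul_eq_mul]
  simp only [and_comm]

/-- With foresight `n - 1` the algorithm sees `v 0, …, v (t + n - 1)`, so the current good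
is the one at index `L.length - n`. -/
def typeRoundRobin (n : ℕ) [NeZero n] (L : List (Fin n → NNReal)) : Fin n :=
  Fin.ofNat n (typeRank (L.getD · 0) (L.length - n))

variable [NeZero n]

lemma allocF_typeRoundRobin (t : ℕ) :
    allocF n (n - 1) (typeRoundRobin n) v t = Fin.ofNat n (typeRank v t) := by
  have hlen : ((List.range (t + (n - 1) + 1)).map v).length - n = t := by
    simp only [List.length_map, List.length_range]
    have := NeZero.pos n
    omega
  rw [allocF, typeRoundRobin, hlen]
  refine congrArg _ (typeRank_congr fun s hs => ?_)
  have hs' : s < t + (n - 1) + 1 := by omega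
  simp [List.getD_eq_getElem?_getD, hs']

lemma bval_bundleF_typeRoundRobin_le {𝒯 : Finset (Fin n → NNReal)} (h𝒯 : ∀ t, v t ∈ 𝒯)
    (i j : Fin n) (T : ℕ) :
    bval n v i (bundleF n (n - 1) (typeRoundRobin n) v j T) ≤
      bval n v i (bundleF n (n - 1) (typeRoundRobin n) v i T) + ∑ w ∈ 𝒯, (w i : ℝ) := by
  simp only [bval_bundleF_eq_sum_types h𝒯, allocF_typeRoundRobin, ← sum_add_distrib]
  refine sum_le_sum fun w _ => ?_
  rw [← add_one_mul]
  gcongr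
  exact_mod_cast card_filter_typeRank_mod_le v w i j T

lemma sum_range_le_mul_bval_bundleF_typeRoundRobin {𝒯 : Finset (Fin n → NNReal)}
    (h𝒯 : ∀ t, v t ∈ 𝒯) (i : Fin n) (T : ℕ) :
    ∑ t ∈ range T, (v t i : ℝ) ≤
      n * (bval n v i (bundleF n (n - 1) (typeRoundRobin n) v i T) + ∑ w ∈ 𝒯, (w i : ℝ)) := by
  rw [← sum_bval_bundleF]
  calc _ ≤ ∑ _j : Fin n, _ := sum_le_sum fun j _ => bval_bundleF_typeRoundRobin_le h𝒯 i j T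
    _ = _ := by rw [sum_const, card_univ, Fintype.card_fin, nsmul_eq_mul]

lemma eventually_mul_le_bval_bundleF_typeRoundRobin {𝒯 : Finset (Fin n → NNReal)}
    (h𝒯 : ∀ t, v t ∈ 𝒯) {β : Fin n → NNReal} (hβ : ∀ i, 0 < β i) (hvβ : ∀ t i, β i ≤ v t i)
    (c : ℝ) :
    ∀ᶠ T in atTop, ∀ i, c * ∑ w ∈ 𝒯, (w i : ℝ) ≤
      bval n v i (bundleF n (n - 1) (typeRoundRobin n) v i T) := by
  refine eventually_all.2 fun i => ?_
  have hgrowth : Tendsto (fun T : ℕ => (T : ℝ) * β i) atTop atTop :=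
    tendsto_natCast_atTop_atTop.atTop_mul_const (by exact_mod_cast hβ i)
  filter_upwards [hgrowth.eventually_ge_atTop (n * (c + 1) * ∑ w ∈ 𝒯, (w i : ℝ))] with T hT
  have hlower : (T : ℝ) * β i ≤ ∑ t ∈ range T, (v t i : ℝ) := by
    simpa using card_nsmul_le_sum (range T) (fun t => (v t i : ℝ)) (β i)
      fun t _ => by exact_mod_cast hvβ t i
  have hupper := sum_range_le_mul_bval_bundleF_typeRoundRobin h𝒯 i T
  have hn : (0 : ℝ) < n := by exact_mod_cast NeZero.pos n
  nlinarith

end Allocation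

lemma div_add_mul_le_of_le_add {lam c B C D : ℝ} (hlam : 0 ≤ lam) (hc : 1 ≤ c) (hB : 0 ≤ B)
    (hD : D ≤ B + C) (hC : lam * C ≤ B) : lam / (lam + c) * D ≤ B := by
  rw [div_mul_eq_mul_div, div_le_iff₀ (by linarith)]
  nlinarith

lemma div_add_div_mul_le_of_le_mul_add {lam c m B C S : ℝ} (hlam : 0 ≤ lam) (hc : 1 ≤ c)
    (hm : 0 < m) (hB : 0 ≤ B) (hS : S ≤ m * (B + C)) (hC : lam * C ≤ B) :
    lam / (lam + c) / m * S ≤ B :=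
  calc lam / (lam + c) / m * S ≤ lam / (lam + c) / m * (m * (B + C)) := by
        have : 0 < lam + c := by linarith
        gcongr
    _ = lam / (lam + c) * (B + C) := by field_simp
    _ ≤ B := div_add_mul_le_of_le_add hlam hc hB le_rfl hC

/-- For `n` agents with `0 < β i ≤ α i`, there is a deterministic online allocation algorithm
with foresight `n−1` such that, on every personalized `2`-value stream and for every positive
integer `λ`, after some time `T₀` the allocation is `(λ/(λ+2))`-EF, `(λ/(λ+1))`-EF1 and
`(λ/(λ+2))`-PROP at the end of every time step `T ≥ T₀`. -/
theorem statement12 (n : ℕ) (hn : 1 ≤ n) (α β : Fin n → NNReal)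
    (hβ : ∀ i, 0 < β i) (hβα : ∀ i, β i ≤ α i) :
    ∃ F : List (Fin n → NNReal) → Fin n,
      ∀ v : ℕ → Fin n → NNReal, (∀ (t : ℕ) (i : Fin n), v t i = α i ∨ v t i = β i) →
        ∀ lam : ℕ, 0 < lam →
          ∃ T₀ : ℕ, ∀ T : ℕ, T₀ ≤ T →
            (∀ i j : Fin n,
              ((lam : ℝ) / ((lam : ℝ) + 2)) * bval n v i (bundleF n (n - 1) F v j T) ≤
                bval n v i (bundleF n (n - 1) F v i T)) ∧
            (∀ i j : Fin n, ∃ X ⊆ bundleF n (n - 1) F v j T, X.card ≤ 1 ∧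
              ((lam : ℝ) / ((lam : ℝ) + 1)) * bval n v i (bundleF n (n - 1) F v j T \ X) ≤
                bval n v i (bundleF n (n - 1) F v i T)) ∧
            (∀ i : Fin n,
              ((lam : ℝ) / ((lam : ℝ) + 2)) / (n : ℝ) * (∑ t ∈ Finset.range T, (v t i : ℝ)) ≤
                bval n v i (bundleF n (n - 1) F v i T)) := by
  have : NeZero n := ⟨by omega⟩
  refine ⟨typeRoundRobin n, fun v hv lam _ => ?_⟩
  have h𝒯 : ∀ t, v t ∈ Fintype.piFinset fun i => ({α i, β i} : Finset NNReal) := fun t =>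
    Fintype.mem_piFinset.2 fun i => by rcases hv t i with h | h <;> simp [h]
  have hvβ : ∀ t i, β i ≤ v t i := fun t i => by rcases hv t i with h | h <;> simp [h, hβα]
  have hlam : (0 : ℝ) ≤ lam := Nat.cast_nonneg lam
  obtain ⟨T₀, hT₀⟩ :=
    eventually_atTop.1 (eventually_mul_le_bval_bundleF_typeRoundRobin h𝒯 hβ hvβ lam)
  refine ⟨T₀, fun T hT => ⟨fun i j => ?_, fun i j => ⟨∅, empty_subset _, by simp, ?_⟩, fun i => ?_⟩⟩
  · exact div_add_mul_le_of_le_add hlam one_le_two (bval_nonneg _ _)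
      (bval_bundleF_typeRoundRobin_le h𝒯 i j T) (hT₀ T hT i)
  · rw [sdiff_empty]
    exact div_add_mul_le_of_le_add hlam le_rfl (bval_nonneg _ _)
      (bval_bundleF_typeRoundRobin_le h𝒯 i j T) (hT₀ T hT i)
  · exact div_add_div_mul_le_of_le_mul_add hlam one_le_two (by exact_mod_cast hn)
      (bval_nonneg _ _) (sum_range_le_mul_bval_bundleF_typeRoundRobin h𝒯 i T) (hT₀ T hT i)
end
end

section
/- Let n ≥ 1 be an integer, M a finite set of goods, and for each agent i ∈ Fin n let v_i : M → ℝ be a valuation with 1 ≤ v_i(g) ≤ α_i for every g ∈ M, where α_i ≥ 1; let v̂_i be the corresponding threshold valuation. Let (A_1, …, A_n) be pairwise disjoint subsets of M, ρ ∈ (0,1], and i an agent. If v̂_i(A_i) ≥ (ρ/n) · v̂_i(A_1 ∪ … ∪ A_n), then v_i(A_i) ≥ (ρ/(n·√α_i)) · v_i(A_1 ∪ … ∪ A_n). If v̂_i(A_i) ≥ ρ · μ_{v̂_i}^n(A_1 ∪ … ∪ A_n), then v_i(A_i) ≥ (ρ/√α_i) · μ_{v_i}^n(A_1 ∪ … ∪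 A_n). -/
open Finset

noncomputable section

/-- The threshold valuation associated with `v` and `α`. -/
def vhat {G : Type*} (α : ℝ) (v : G → ℝ) (g : G) : ℝ :=
  if Real.sqrt α < v g then α else Real.sqrt α

/-- The `n`-agent maximin share of the additive valuation `w` over the finite set `S` of goods. -/
def mmsG {G : Type*} (n : ℕ) (S : Finset G) (w : G → ℝ) : ℝ :=
  sSup { x : ℝ | ∃ P : G → Fin n,
    x = ⨅ j : Fin n, ∑ g ∈ S.filter (fun g => P g = j), w g }

/-! Pointwise, `v ≤ v̂ ≤ √α · v`: a good with `v g > √α` is raised to `α = √α · √α < √α · v g`,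
and any other good to `√α ≤ √α · v g` because `v g ≥ 1`. Summing, `v̂` overestimates `v` on the
whole set of goods, hence also its maximin share, and it overestimates `v(Aᵢ)` by at most the
factor `√α`. -/

section ThresholdValuation

variable {G : Type*} {α : ℝ} {v : G → ℝ}

lemma le_vhat {g : G} (h : v g ≤ α) : v g ≤ vhat α v g := by
  unfold vhat
  split_ifs with hlt
  · exact h
  · exact not_lt.mp hlt

lemma vhat_le_sqrt_mul {g : G} (hα : 0 ≤ α) (h : 1 ≤ v g) : vhat α v g ≤ √α * v g := by
  unfold vhat
  split_ifs with hlt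
  · calc α = √α * √α := (Real.mul_self_sqrt hα).symm
      _ ≤ √α * v g := by gcongr
  · calc √α = √α * 1 := (mul_one _).symm
      _ ≤ √α * v g := by gcongr

lemma vhat_nonneg {g : G} (hα : 0 ≤ α) : 0 ≤ vhat α v g := by
  unfold vhat
  split_ifs <;> positivity

lemma sum_le_sum_vhat {S : Finset G} (h : ∀ g ∈ S, v g ≤ α) :
    ∑ g ∈ S, v g ≤ ∑ g ∈ S, vhat α v g :=
  sum_le_sum fun g hg => le_vhat (h g hg)

lemma sum_vhat_le_sqrt_mul_sum {S : Finset G} (hα : 0 ≤ α) (h : ∀ g ∈ S, 1 ≤ v g) :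
    ∑ g ∈ S, vhat α v g ≤ √α * ∑ g ∈ S, v g := by
  rw [mul_sum]
  exact sum_le_sum fun g hg => vhat_le_sqrt_mul hα (h g hg)

end ThresholdValuation

section MaximinShare

variable {G : Type*} {n : ℕ} [NeZero n] {S : Finset G}

lemma bddAbove_mmsG_set {w : G → ℝ} (h0 : ∀ g ∈ S, 0 ≤ w g) :
    BddAbove { x : ℝ | ∃ P : G → Fin n,
      x = ⨅ j : Fin n, ∑ g ∈ S.filter (fun g => P g = j), w g } := by
  refine ⟨∑ g ∈ S, w g, ?_⟩
  rintro x ⟨P, rfl⟩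
  calc (⨅ j : Fin n, ∑ g ∈ S.filter (fun g => P g = j), w g)
      ≤ ∑ g ∈ S.filter (fun g => P g = 0), w g := ciInf_le (Set.finite_range _).bddBelow _
    _ ≤ ∑ g ∈ S, w g := sum_le_sum_of_subset_of_nonneg (filter_subset _ _) fun g hg _ => h0 g hg

lemma mmsG_mono {w₁ w₂ : G → ℝ} (h0 : ∀ g ∈ S, 0 ≤ w₂ g) (h : ∀ g ∈ S, w₁ g ≤ w₂ g) :
    mmsG n S w₁ ≤ mmsG n S w₂ := by
  refine csSup_le ⟨_, fun _ => 0, rfl⟩ ?_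
  rintro x ⟨P, rfl⟩
  refine le_trans ?_ (le_csSup (bddAbove_mmsG_set h0) ⟨P, rfl⟩)
  exact ciInf_mono (Set.finite_range _).bddBelow fun j =>
    sum_le_sum fun g hg => h g (mem_filter.mp hg).1

end MaximinShare

lemma div_mul_le_of_mul_le_mul {c s x y : ℝ} (hs : 0 < s) (h : c * x ≤ s * y) :
    c / s * x ≤ y := by
  rw [div_mul_eq_mul_div, div_le_iff₀ hs]
  linarith

theorem statement16_general {G : Type*} [DecidableEq G] (n : ℕ) (M : Finset G)
    (α : Fin n → ℝ) (hα : ∀ i, 1 ≤ α i)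
    (v : Fin n → G → ℝ) (hv : ∀ i, ∀ g ∈ M, 1 ≤ v i g ∧ v i g ≤ α i)
    (A : Fin n → Finset G) (hAM : ∀ i, A i ⊆ M)
    (ρ : ℝ) (hρ0 : 0 < ρ) (i : Fin n) :
    ((ρ / (n : ℝ)) * ∑ g ∈ Finset.univ.biUnion A, vhat (α i) (v i) g ≤
        ∑ g ∈ A i, vhat (α i) (v i) g →
      (ρ / ((n : ℝ) * Real.sqrt (α i))) * ∑ g ∈ Finset.univ.biUnion A, v i g ≤
        ∑ g ∈ A i, v i g) ∧
    (ρ * mmsG n (Finset.univ.biUnion A) (vhat (α i) (v i)) ≤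
        ∑ g ∈ A i, vhat (α i) (v i) g →
      (ρ / Real.sqrt (α i)) * mmsG n (Finset.univ.biUnion A) (v i) ≤
        ∑ g ∈ A i, v i g) := by
  have hα0 : 0 ≤ α i := zero_le_one.trans (hα i)
  have hs : 0 < √(α i) := Real.sqrt_pos.mpr (zero_lt_one.trans_le (hα i))
  have hSM : univ.biUnion A ⊆ M := biUnion_subset.mpr fun j _ => hAM j
  have hA : ∑ g ∈ A i, vhat (α i) (v i) g ≤ √(α i) * ∑ g ∈ A i, v i g :=
    sum_vhat_le_sqrt_mul_sum hα0 fun g hg => (hv i g (hAM i hg)).1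
  refine ⟨fun h => ?_, fun h => ?_⟩
  · rw [← div_div]
    refine div_mul_le_of_mul_le_mul hs ?_
    calc ρ / n * ∑ g ∈ univ.biUnion A, v i g
        ≤ ρ / n * ∑ g ∈ univ.biUnion A, vhat (α i) (v i) g := by
          gcongr ρ / n * ?_
          exact sum_le_sum_vhat fun g hg => (hv i g (hSM hg)).2
      _ ≤ √(α i) * ∑ g ∈ A i, v i g := h.trans hA
  · have : NeZero n := ⟨i.pos.ne'⟩
    refine div_mul_le_of_mul_le_mul hs ?_
    calc ρ * mmsG n (univ.biUnion A) (v i)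
        ≤ ρ * mmsG n (univ.biUnion A) (vhat (α i) (v i)) := by
          gcongr
          exact mmsG_mono (fun _ _ => vhat_nonneg hα0) fun g hg => le_vhat (hv i g (hSM hg)).2
      _ ≤ √(α i) * ∑ g ∈ A i, v i g := h.trans hA

/-- If an allocation is `ρ`-PROP (resp. `ρ`-MMS) for agent `i` with respect to the threshold
valuations, then it is `(ρ/√(α i))`-PROP (resp. `(ρ/√(α i))`-MMS) for `i` with respect to the
original valuations. -/
theorem statement16 {G : Type*} [DecidableEq G] (n : ℕ) (hn : 1 ≤ n) (M : Finset G)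
    (α : Fin n → ℝ) (hα : ∀ i, 1 ≤ α i)
    (v : Fin n → G → ℝ) (hv : ∀ i, ∀ g ∈ M, 1 ≤ v i g ∧ v i g ≤ α i)
    (A : Fin n → Finset G) (hAM : ∀ i, A i ⊆ M)
    (hdisj : ∀ i j, i ≠ j → Disjoint (A i) (A j))
    (ρ : ℝ) (hρ0 : 0 < ρ) (hρ1 : ρ ≤ 1) (i : Fin n) :
    ((ρ / (n : ℝ)) * ∑ g ∈ Finset.univ.biUnion A, vhat (α i) (v i) g ≤
        ∑ g ∈ A i, vhat (α i) (v i) g →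
      (ρ / ((n : ℝ) * Real.sqrt (α i))) * ∑ g ∈ Finset.univ.biUnion A, v i g ≤
        ∑ g ∈ A i, v i g) ∧
    (ρ * mmsG n (Finset.univ.biUnion A) (vhat (α i) (v i)) ≤
        ∑ g ∈ A i, vhat (α i) (v i) g →
      (ρ / Real.sqrt (α i)) * mmsG n (Finset.univ.biUnion A) (v i) ≤
        ∑ g ∈ A i, v i g) :=
  statement16_general n M α hα v hv A hAM ρ hρ0 i

end
end

section
/- For every integer n ≥ 1 and every α : Fin n → ℝ with α i > 1 for all i, there exists a deterministic online allocation algorithm F such that for every personalized interval-restricted stream v (i.e., 1 ≤ v t i ≤ α i for all t, i), every agent i, and every time step T: v_i(A_i^T) ≥ μ_i^n(T) / (√(α i) · (2n−1)); moreover, if |{t < T : v t i > √(α i)}| ≥ n, then v_i(A_i^T) ≥ μ_i^n(T) / (4 · √(α i)). -/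
open Finset
open scoped Classical

noncomputable section

/-!
Write `c = √(α i)` and call a good big for `i` when its value exceeds `c`. The maximin share is
at most the total value over `n`, and when fewer than `n` goods are big it is at most `c` times the
number of goods outside the `n - 1` most valuable ones. So it suffices that every agent gets one
good in every `2n - 1` slots (after an initial `n - 1`), and, once it has seen `n` big goods, one
big good for every `4n - 3` big goods it has seen.

The algorithm first serves each agent once, preferring agents for which the good is big. Then it
serves a least-served agent, unless the pending good would break the ladder condition on the
slacks (the unused parts of the big-goods quotas): sorted increasingly, the `k`-th slack (from
`k = 0`) must be at least `k`. In that case it serves the big agent of least slack, whose slack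
jumps to at least `3n - 3`; this keeps the ladder, so slacks stay nonnegative. A lifted slack needs
more than `2n - 2` slots to come back down, so while an agent is skipped for `2n - 1` consecutive
slots, every other agent is the target of at most one alarm and of at most one least-served step
there, which is impossible.
-/

namespace OnlineMMS

section MaximinShare

variable {n : ℕ} {S A : Finset ℕ} {w : ℕ → ℝ} {a c : ℝ}

theorem mmsN_le_of_forall_exists_le (ha : 0 ≤ a)
    (h : ∀ P : ℕ → Fin n, ∃ j, ∑ t ∈ S.filter (fun t => P t = j), w t ≤ a) :
    mmsN n S w ≤ a := by
  refine Real.sSup_le ?_ ha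
  rintro x ⟨P, rfl⟩
  obtain ⟨j, hj⟩ := h P
  exact (ciInf_le (Set.finite_range _).bddBelow j).trans hj

theorem mmsN_le_sum_div [NeZero n] (hw : ∀ t ∈ S, 0 ≤ w t) :
    mmsN n S w ≤ (∑ t ∈ S, w t) / n := by
  refine mmsN_le_of_forall_exists_le (by have := sum_nonneg hw; positivity) fun P => ?_
  have htotal : ∑ j, ∑ t ∈ S.filter (fun t => P t = j), w t = ∑ _j : Fin n, (∑ t ∈ S, w t) / n := by
    simp [sum_fiberwise_of_maps_to (fun t _ => mem_univ (P t)) w,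
      mul_div_cancel₀ _ (NeZero.ne (n : ℝ))]
  obtain ⟨j, -, hj⟩ := exists_le_of_sum_le univ_nonempty htotal.le
  exact ⟨j, hj⟩

/-- Fewer than `n` goods cannot meet all `n` bundles. -/
theorem mmsN_le_sum_sdiff (hw : ∀ t ∈ S, 0 ≤ w t) {B : Finset ℕ} (hB : #B < n) :
    mmsN n S w ≤ ∑ t ∈ S \ B, w t := by
  refine mmsN_le_of_forall_exists_le (sum_nonneg fun t ht => hw t (mem_sdiff.1 ht).1) fun P => ?_
  obtain ⟨j, hj⟩ : ∃ j, j ∉ B.image P := by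
    by_contra! h
    have := (card_le_card (fun j _ => h j : univ ⊆ B.image P)).trans card_image_le
    simp only [card_univ, Fintype.card_fin] at this
    omega
  refine ⟨j, sum_le_sum_of_subset_of_nonneg (fun t ht => ?_) fun t ht _ => hw t (mem_sdiff.1 ht).1⟩
  rw [mem_filter] at ht
  exact mem_sdiff.2 ⟨ht.1, fun htB => hj (ht.2 ▸ mem_image_of_mem P htB)⟩

theorem mmsN_le_of_card_filter_lt (hw : ∀ t ∈ S, 0 ≤ w t)
    (hbig : #(S.filter fun t => c < w t) < n) :
    mmsN n S w ≤ (#S - (n - 1) : ℕ) * c := by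
  obtain ⟨B, hKB, hBS, hB⟩ := exists_subsuperset_card_eq (filter_subset (fun t => c < w t) S)
    (n := min (n - 1) #S) (le_min (by omega) (card_filter_le _ _)) (min_le_right _ _)
  calc mmsN n S w ≤ ∑ t ∈ S \ B, w t := mmsN_le_sum_sdiff hw (by omega)
    _ ≤ #(S \ B) • c := sum_le_card_nsmul _ _ _ fun t ht => by
        rw [mem_sdiff] at ht
        exact not_lt.1 fun h => ht.2 (hKB (mem_filter.2 ⟨ht.1, h⟩))
    _ = (#S - (n - 1) : ℕ) * c := by
        rw [card_sdiff_of_subset hBS, hB, nsmul_eq_mul]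
        congr 2
        omega

theorem sum_le_mul_of_le_sq (hw : ∀ t ∈ S, w t ≤ c ^ 2) :
    ∑ t ∈ S, w t ≤ c * (#(S.filter fun t => c < w t) * (c - 1) + #S) := by
  set K := S.filter fun t => c < w t
  have hcard : #K + #(S.filter fun t => ¬ c < w t) = #S := card_filter_add_card_filter_not _
  have hbig : ∑ t ∈ K, w t ≤ #K • c ^ 2 :=
    sum_le_card_nsmul _ _ _ fun t ht => hw t (mem_filter.1 ht).1
  have hsmall : ∑ t ∈ S.filter (fun t => ¬ c < w t), w t ≤ #(S.filter fun t => ¬ c < w t) • c :=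
    sum_le_card_nsmul _ _ _ fun t ht => not_lt.1 (mem_filter.1 ht).2
  rw [nsmul_eq_mul] at hbig hsmall
  rw [← hcard, ← sum_filter_add_sum_filter_not S (fun t => c < w t) w]
  push_cast
  nlinarith

theorem le_sum_of_one_le (hw : ∀ t ∈ A, 1 ≤ w t) :
    #(A.filter fun t => c < w t) * (c - 1) + #A ≤ ∑ t ∈ A, w t := by
  set B := A.filter fun t => c < w t
  have hcard : #B + #(A.filter fun t => ¬ c < w t) = #A := card_filter_add_card_filter_not _
  have hbig : #B • c ≤ ∑ t ∈ B, w t := card_nsmul_le_sum _ _ _ fun t ht => (mem_filter.1 ht).2.le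
  have hsmall :
      #(A.filter fun t => ¬ c < w t) • (1 : ℝ) ≤ ∑ t ∈ A.filter (fun t => ¬ c < w t), w t :=
    card_nsmul_le_sum _ _ _ fun t ht => hw t (mem_filter.1 ht).1
  rw [nsmul_eq_mul] at hbig hsmall
  rw [← hcard, ← sum_filter_add_sum_filter_not A (fun t => c < w t) w]
  push_cast
  linarith

theorem mul_mmsN_le [NeZero n] {D : ℝ} (hD : 0 ≤ D) (hc : 1 ≤ c)
    (hw : ∀ t, 1 ≤ w t ∧ w t ≤ c ^ 2)
    (hK : (#(S.filter fun t => c < w t) : ℝ) ≤ D * #(A.filter fun t => c < w t))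
    (hS : (#S : ℝ) ≤ D * #A) :
    n * mmsN n S w ≤ c * D * ∑ t ∈ A, w t := by
  have hn : (0 : ℝ) < n := by exact_mod_cast NeZero.pos n
  have hmms := mmsN_le_sum_div (n := n) (S := S) fun t _ => zero_le_one.trans (hw t).1
  rw [le_div_iff₀ hn] at hmms
  calc n * mmsN n S w ≤ ∑ t ∈ S, w t := by linarith
    _ ≤ c * (#(S.filter fun t => c < w t) * (c - 1) + #S) := sum_le_mul_of_le_sq fun t _ => (hw t).2
    _ ≤ c * (D * #(A.filter fun t => c < w t) * (c - 1) + D * #A) := by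
        gcongr
    _ = c * D * (#(A.filter fun t => c < w t) * (c - 1) + #A) := by ring
    _ ≤ c * D * ∑ t ∈ A, w t := by
        gcongr
        exact le_sum_of_one_le fun t _ => (hw t).1

theorem mmsN_le_of_few_big [NeZero n] {T : ℕ} (hw : ∀ t, 1 ≤ w t) (hc : 0 ≤ c)
    (hK : #((range T).filter fun t => c < w t) < n) (hrate : T ≤ (2 * n - 1) * #A + (n - 1)) :
    mmsN n (range T) w ≤ c * (2 * n - 1) * ∑ t ∈ A, w t := by
  have hn : 1 ≤ n := NeZero.one_le
  have h2 : ((2 * n - 1 : ℕ) : ℝ) = 2 * n - 1 := by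
    rw [Nat.cast_sub (by omega)]
    push_cast
    ring
  have hle : ((#(range T) - (n - 1) : ℕ) : ℝ) ≤ (2 * n - 1) * #A := by
    rw [← h2, ← Nat.cast_mul, card_range]
    exact_mod_cast (show T - (n - 1) ≤ (2 * n - 1) * #A by omega)
  have hA : (#A : ℝ) ≤ ∑ t ∈ A, w t := by simpa using card_nsmul_le_sum A w 1 fun t _ => hw t
  have hn' : (1 : ℝ) ≤ n := by exact_mod_cast hn
  calc mmsN n (range T) w ≤ (#(range T) - (n - 1) : ℕ) * c :=
        mmsN_le_of_card_filter_lt (fun t _ => zero_le_one.trans (hw t)) hK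
    _ ≤ (2 * n - 1) * #A * c := mul_le_mul_of_nonneg_right hle hc
    _ = c * (2 * n - 1) * #A := by ring
    _ ≤ c * (2 * n - 1) * ∑ t ∈ A, w t :=
        mul_le_mul_of_nonneg_left hA (mul_nonneg hc (by linarith))

theorem mul_mmsN_le_of_many_big [NeZero n] {T : ℕ} (hc : 1 ≤ c)
    (hw : ∀ t, 1 ≤ w t ∧ w t ≤ c ^ 2) (hK : n ≤ #((range T).filter fun t => c < w t))
    (hrate : T ≤ (2 * n - 1) * #A + (n - 1))
    (hquota : #((range T).filter fun t => c < w t) ≤ (4 * n - 3) * #(A.filter fun t => c < w t)) :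
    n * mmsN n (range T) w ≤ c * (4 * n - 3) * ∑ t ∈ A, w t := by
  have hn : 1 ≤ n := NeZero.one_le
  have hB : 1 ≤ #(A.filter fun t => c < w t) := by
    by_contra! h0
    rw [Nat.lt_one_iff.1 h0, mul_zero] at hquota
    omega
  have hA : (1 : ℝ) ≤ #A := by exact_mod_cast hB.trans (card_filter_le _ _)
  have hrate' : (T : ℝ) ≤ (2 * n - 1) * #A + (n - 1) := by
    have := (Nat.cast_le (α := ℝ)).2 hrate
    push_cast [Nat.cast_sub (show 1 ≤ 2 * n by omega), Nat.cast_sub hn] at this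
    exact this
  have hquota' : (#((range T).filter fun t => c < w t) : ℝ) ≤
      (4 * n - 3) * #(A.filter fun t => c < w t) := by
    have := (Nat.cast_le (α := ℝ)).2 hquota
    push_cast [Nat.cast_sub (show 3 ≤ 4 * n by omega)] at this
    exact this
  have hn' : (1 : ℝ) ≤ n := by exact_mod_cast hn
  exact mul_mmsN_le (by linarith) hc hw hquota' (by rw [card_range]; nlinarith)

theorem mmsN_div_le_of_rate_of_quota [NeZero n] {T : ℕ} (ha : 1 < a)
    (hw : ∀ t, 1 ≤ w t ∧ w t ≤ a) (hrate : T ≤ (2 * n - 1) * #A + (n - 1))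
    (hquota : n ≤ #((range T).filter fun t => Real.sqrt a < w t) →
      #((range T).filter fun t => Real.sqrt a < w t) ≤
        (4 * n - 3) * #(A.filter fun t => Real.sqrt a < w t)) :
    mmsN n (range T) w / (Real.sqrt a * (2 * n - 1)) ≤ ∑ t ∈ A, w t ∧
      (n ≤ #((range T).filter fun t => Real.sqrt a < w t) →
        mmsN n (range T) w / (4 * Real.sqrt a) ≤ ∑ t ∈ A, w t) := by
  have hc : 1 < Real.sqrt a := Real.lt_sqrt_of_sq_lt (by linarith)
  have hw' (t : ℕ) : 1 ≤ w t ∧ w t ≤ Real.sqrt a ^ 2 := by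
    rw [Real.sq_sqrt (by linarith)]
    exact hw t
  have hn : (1 : ℝ) ≤ n := by exact_mod_cast NeZero.one_le
  have hsum : 0 ≤ Real.sqrt a * ∑ t ∈ A, w t :=
    mul_nonneg (by linarith) (sum_nonneg fun t _ => zero_le_one.trans (hw t).1)
  by_cases hK : n ≤ #((range T).filter fun t => Real.sqrt a < w t)
  · have key := mul_mmsN_le_of_many_big hc.le hw' hK hrate (hquota hK)
    -- false for real `1 < n < 3/2`, hence the case split
    have h4 : 4 * (n : ℝ) - 3 ≤ n * (2 * n - 1) := by
      rcases Nat.lt_or_ge n 2 with h | h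
      · have : (n : ℝ) = 1 := by exact_mod_cast (show n = 1 by have := NeZero.pos n; omega)
        rw [this]
        norm_num
      · have : (2 : ℝ) ≤ n := by exact_mod_cast h
        nlinarith
    refine ⟨?_, fun _ => ?_⟩ <;> rw [div_le_iff₀ (by nlinarith)] <;>
      refine le_of_mul_le_mul_left (key.trans ?_) (by linarith : (0 : ℝ) < n) <;> nlinarith
  · refine ⟨?_, fun h => absurd h hK⟩
    rw [div_le_iff₀ (by nlinarith)]
    linarith [mmsN_le_of_few_big (fun t => (hw t).1) (by linarith) (not_le.1 hK) hrate]

end MaximinShare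

section Ladder

variable {ι : Type*} {A S : Finset ι} {r r' r'' : ι → ℤ}

/-- Sorted increasingly, the values of `r` on `A` dominate `0, 1, 2, …`. -/
def LadderOn (A : Finset ι) (r : ι → ℤ) : Prop :=
  ∀ q : ℕ, #(A.filter fun i => r i < q) ≤ q

theorem LadderOn.nonneg (h : LadderOn A r) {i : ι} (hi : i ∈ A) : 0 ≤ r i := by
  by_contra! hr
  have := h 0
  rw [Nat.le_zero, card_eq_zero, filter_eq_empty_iff] at this
  exact this hi (by exact_mod_cast hr)

theorem LadderOn.mono (h : LadderOn A r) (hr : ∀ i ∈ A, r i ≤ r' i) : LadderOn A r' := by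
  intro q
  refine (card_le_card fun i hi => ?_).trans (h q)
  rw [mem_filter] at hi ⊢
  exact ⟨hi.1, (hr i hi.1).trans_lt hi.2⟩

theorem LadderOn.insert [DecidableEq ι] (h : LadderOn A r) {i : ι}
    (hri : (#A : ℤ) ≤ r i) : LadderOn (insert i A) r := by
  intro q
  rw [filter_insert]
  split_ifs with hiq
  · have : #A < q := by exact_mod_cast hri.trans_lt hiq
    exact (card_insert_le _ _).trans ((Nat.add_le_add_right (card_filter_le _ _) 1).trans this)
  · exact h q

theorem LadderOn.univ_of_card_sub_one_le [Fintype ι] (h : LadderOn A r)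
    (hr : ∀ i ∉ A, (Fintype.card ι : ℤ) - 1 ≤ r i) : LadderOn univ r := by
  intro q
  rcases le_or_gt (Fintype.card ι) q with hq | hq
  · exact (card_filter_le _ _).trans (card_univ.trans_le hq)
  refine (card_le_card fun i hi => ?_).trans (h q)
  rw [mem_filter] at hi ⊢
  by_contra hiA
  have := hr i (fun h' => hiA ⟨h', hi.2⟩)
  omega

variable [Fintype ι]

theorem LadderOn.exists_lt_of_not (h : LadderOn univ r) (hS : ∀ i ∉ S, r' i = r i)
    (h' : ¬ LadderOn univ r') : ∃ i ∈ S, r' i < Fintype.card ι - 1 := by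
  obtain ⟨q, hq⟩ : ∃ q : ℕ, q < #(univ.filter fun i => r' i < q) := by
    simpa [LadderOn] using h'
  obtain ⟨i, hi, hir⟩ := not_subset.1 fun hsub => (card_le_card hsub).trans (h q) |>.not_gt hq
  simp only [mem_filter, mem_univ, true_and] at hi hir
  have hqn : q < Fintype.card ι := hq.trans_le ((card_filter_le _ _).trans card_univ.le)
  refine ⟨i, by_contra fun hiS => hir (hS i hiS ▸ hi), by omega⟩

theorem LadderOn.of_lift_min (h : LadderOn univ r) (hS : ∀ i ∉ S, r' i = r i)
    (hdrop : ∀ i, r i - 1 ≤ r' i) {w : ι} (hmin : ∀ i ∈ S, r' w ≤ r' i)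
    (hlift : ∀ i ≠ w, r' i ≤ r'' i) (hw : (Fintype.card ι : ℤ) - 1 ≤ r'' w) :
    LadderOn univ r'' := by
  intro q
  rcases le_or_gt (Fintype.card ι) q with hq | hq
  · exact (card_filter_le _ _).trans (card_univ.trans_le hq)
  have hwq : ¬ r'' w < q := by omega
  by_cases hlow : r' w < q
  · have hsub : univ.filter (fun i => r'' i < q) ⊆
        (univ.filter fun i => r i < (q + 1 : ℕ)).erase w := by
      intro i hi
      simp only [mem_filter, mem_univ, true_and, mem_erase] at hi ⊢
      have hiw : i ≠ w := fun hiw => hwq (hiw ▸ hi)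
      have := hdrop i
      have := hlift i hiw
      exact ⟨hiw, by push_cast; omega⟩
    have hw' : w ∈ univ.filter fun i => r i < (q + 1 : ℕ) := by
      simp only [mem_filter, mem_univ, true_and]
      have := hdrop w
      push_cast
      omega
    have := card_le_card hsub
    rw [card_erase_of_mem hw'] at this
    have := h (q + 1)
    omega
  · refine (card_le_card fun i hi => ?_).trans (h q)
    simp only [mem_filter, mem_univ, true_and] at hi ⊢
    have hiw : i ≠ w := fun hiw => hwq (hiw ▸ hi)
    have hiS : i ∉ S := fun hiS => by have := hmin i hiS; have := hlift i hiw; omega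
    have := hlift i hiw
    rw [← hS i hiS]
    omega

end Ladder

section Algorithm

variable {n : ℕ} (α : Fin n → ℝ)

def bigAgents (g : Fin n → NNReal) : Finset (Fin n) :=
  univ.filter fun i => Real.sqrt (α i) < g i

structure Counts (n : ℕ) where
  received : Fin n → ℕ
  receivedBig : Fin n → ℕ
  seenBig : Fin n → ℕ

namespace Counts

variable (s : Counts n)

/-- `0 ≤ s.slack i` is the quota on big goods: before its first big good agent `i` may see at
most `n - 1` of them, afterwards at most `4n - 3` per big good received. -/
def slack (i : Fin n) : ℤ :=
  if s.receivedBig i = 0 then n - 1 - s.seenBig i else (4 * n - 3) * s.receivedBig i - s.seenBig i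

def observe (g : Fin n → NNReal) : Counts n :=
  { s with seenBig := fun i => s.seenBig i + if i ∈ bigAgents α g then 1 else 0 }

def give (g : Fin n → NNReal) (w : Fin n) : Counts n :=
  { s with
    received := fun i => s.received i + if i = w then 1 else 0
    receivedBig := fun i => s.receivedBig i + if i = w ∧ w ∈ bigAgents α g then 1 else 0 }

def unserved : Finset (Fin n) := univ.filter fun i => s.received i = 0

def credited : Finset (Fin n) := univ.filter fun i => s.receivedBig i ≠ 0

def uncredited : Finset (Fin n) := univ.filter fun i => s.received i ≠ 0 ∧ s.receivedBig i = 0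

end Counts

section Argmin

variable [NeZero n] {β : Type*} [LinearOrder β] {f : Fin n → β} {A : Finset (Fin n)}

def argminOn (f : Fin n → β) (A : Finset (Fin n)) : Fin n :=
  if h : A.Nonempty then (A.exists_min_image f h).choose else 0

theorem argminOn_mem (h : A.Nonempty) : argminOn f A ∈ A := by
  rw [argminOn, dif_pos h]
  exact (A.exists_min_image f h).choose_spec.1

theorem argminOn_le {i : Fin n} (hi : i ∈ A) : f (argminOn f A) ≤ f i := by
  rw [argminOn, dif_pos ⟨i, hi⟩]
  exact (A.exists_min_image f ⟨i, hi⟩).choose_spec.2 i hi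

end Argmin

def Alarm (s : Counts n) (g : Fin n → NNReal) : Prop :=
  ¬ LadderOn univ (s.observe α g).slack

variable [NeZero n]

/-- `s.unserved` is nonempty exactly during the first `n` slots. -/
def target (s : Counts n) (g : Fin n → NNReal) : Fin n :=
  if (bigAgents α g ∩ s.unserved).Nonempty then argminOn s.received (bigAgents α g ∩ s.unserved)
  else if s.unserved.Nonempty ∨ ¬ Alarm α s g then argminOn s.received univ
  else argminOn (s.observe α g).slack (bigAgents α g)

def step (s : Counts n) (g : Fin n → NNReal) : Counts n :=
  (s.observe α g).give α g (target α s g)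

def state (v : ℕ → Fin n → NNReal) (T : ℕ) : Counts n :=
  ((List.range T).map v).foldl (step α) ⟨0, 0, 0⟩

def algorithm (l : List (Fin n → NNReal)) : Fin n :=
  target α (l.dropLast.foldl (step α) ⟨0, 0, 0⟩) (l.getLastD 0)

variable (v : ℕ → Fin n → NNReal)

theorem state_succ (T : ℕ) : state α v (T + 1) = step α (state α v T) (v T) := by
  simp [state, List.range_succ]

theorem alloc_algorithm (t : ℕ) : alloc n (algorithm α) v t = target α (state α v t) (v t) := by
  simp [alloc, algorithm, state, List.range_succ]

end Algorithm

namespace Counts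

variable {n : ℕ} {α : Fin n → ℝ} (s : Counts n) (g : Fin n → NNReal) {w : Fin n}

theorem slack_observe (i : Fin n) :
    (s.observe α g).slack i = s.slack i - if i ∈ bigAgents α g then 1 else 0 := by
  by_cases hi : i ∈ bigAgents α g <;> simp only [slack, observe, hi] <;> split_ifs <;>
    push_cast <;> ring

theorem slack_observe_of_not_mem {i : Fin n} (hi : i ∉ bigAgents α g) :
    (s.observe α g).slack i = s.slack i := by
  simp [slack_observe, hi]

theorem slack_sub_one_le_slack_observe (i : Fin n) : s.slack i - 1 ≤ (s.observe α g).slack i := by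
  rw [slack_observe]
  split_ifs <;> omega

theorem slack_give_of_ne {i : Fin n} (h : i ≠ w) : (s.give α g w).slack i = s.slack i := by
  simp [slack, give, h]

theorem unserved_give : (s.give α g w).unserved = s.unserved.erase w := by
  ext i
  by_cases h : i = w <;> simp [unserved, give, h]

theorem credited_give_of_mem (hw : w ∈ bigAgents α g) :
    (s.give α g w).credited = insert w s.credited := by
  ext i
  by_cases h : i = w <;> simp [credited, give, h, hw]

theorem credited_give_of_not_mem (hw : w ∉ bigAgents α g) :
    (s.give α g w).credited = s.credited := by
  ext i
  simp [credited, give, hw]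

theorem uncredited_give_of_mem (hw0 : s.received w = 0) (hw : w ∈ bigAgents α g) :
    (s.give α g w).uncredited = s.uncredited := by
  ext i
  by_cases h : i = w <;> simp [uncredited, give, h, hw, hw0]

theorem uncredited_give_of_not_mem (hw0 : s.received w = 0) (hb0 : s.receivedBig w = 0)
    (hw : w ∉ bigAgents α g) : (s.give α g w).uncredited = insert w s.uncredited := by
  ext i
  by_cases h : i = w <;> simp [uncredited, give, h, hw, hw0, hb0]

variable [NeZero n]

theorem slack_le_slack_give : s.slack w ≤ (s.give α g w).slack w := by
  have := NeZero.pos n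
  by_cases hw : w ∈ bigAgents α g
  · by_cases h0 : s.receivedBig w = 0 <;> simp [slack, give, hw, h0] <;> nlinarith
  · simp [slack, give, hw]

theorem slack_give_of_mem (hw : w ∈ bigAgents α g) (h : -1 ≤ s.slack w) :
    3 * n - 3 ≤ (s.give α g w).slack w := by
  have := NeZero.pos n
  by_cases h0 : s.receivedBig w = 0 <;> simp [slack, give, hw, h0] at h ⊢ <;> nlinarith

end Counts

section Run

variable {n : ℕ} (α : Fin n → ℝ) (v : ℕ → Fin n → NNReal)

theorem bundle_succ (F : List (Fin n → NNReal) → Fin n) (i : Fin n) (T : ℕ) :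
    bundle n F v i (T + 1) =
      if alloc n F v T = i then insert T (bundle n F v i T) else bundle n F v i T := by
  rw [bundle, bundle, range_add_one, filter_insert]

variable [NeZero n]

theorem received_state_eq_card (i : Fin n) (T : ℕ) :
    (state α v T).received i = #(bundle n (algorithm α) v i T) := by
  induction T with
  | zero => rfl
  | succ T ih =>
    rw [bundle_succ, alloc_algorithm, state_succ]
    simp only [step, Counts.give, Counts.observe, eq_comm (a := i), ih]
    split_ifs <;> simp [bundle]

theorem receivedBig_state_eq_card (i : Fin n) (T : ℕ) :
    (state α v T).receivedBig i =
      #((bundle n (algorithm α) v i T).filter fun t => Real.sqrt (α i) < v t i) := by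
  induction T with
  | zero => rfl
  | succ T ih =>
    have hT : T ∉ (bundle n (algorithm α) v i T).filter fun t => Real.sqrt (α i) < v t i := by
      simp [bundle]
    rw [bundle_succ, alloc_algorithm, state_succ]
    simp only [step, Counts.give, Counts.observe, ih]
    generalize target α (state α v T) (v T) = w
    rcases eq_or_ne w i with rfl | h
    · by_cases hb : Real.sqrt (α w) < v T w <;>
        simp [hb, bigAgents, filter_insert, card_insert_of_notMem hT]
    · simp [h, Ne.symm h]

theorem seenBig_state_eq_card (i : Fin n) (T : ℕ) :
    (state α v T).seenBig i = #((range T).filter fun t => Real.sqrt (α i) < v t i) := by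
  induction T with
  | zero => rfl
  | succ T ih =>
    rw [state_succ, range_add_one, filter_insert]
    simp only [step, Counts.give, Counts.observe, bigAgents, mem_filter, mem_univ, true_and, ih]
    split_ifs
    · rw [card_insert_of_notMem (by simp)]
    · rfl

theorem seenBig_state_le (i : Fin n) (T : ℕ) : (state α v T).seenBig i ≤ T := by
  rw [seenBig_state_eq_card]
  exact (card_filter_le _ _).trans (card_range T).le

theorem receivedBig_state_le (i : Fin n) (T : ℕ) :
    (state α v T).receivedBig i ≤ (state α v T).received i := by
  rw [receivedBig_state_eq_card, received_state_eq_card]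
  exact card_filter_le _ _

theorem monotone_received_state (i : Fin n) : Monotone fun T => (state α v T).received i :=
  monotone_nat_of_le_succ fun T => by
    rw [state_succ]
    exact Nat.le_add_right _ _

theorem received_state_target (T : ℕ) :
    (state α v (T + 1)).received (target α (state α v T) (v T)) =
      (state α v T).received (target α (state α v T) (v T)) + 1 := by
  rw [state_succ]
  simp [step, Counts.give, Counts.observe]

variable {s : Counts n} {g : Fin n → NNReal}

theorem target_mem_unserved (h : s.unserved.Nonempty) : target α s g ∈ s.unserved := by
  unfold target
  split_ifs with hbig hphase
  · exact (mem_inter.1 (argminOn_mem hbig)).2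
  · obtain ⟨i, hi⟩ := h
    have := argminOn_le (f := s.received) (mem_univ i)
    simp only [Counts.unserved, mem_filter, mem_univ, true_and] at hi ⊢
    omega
  · exact absurd (Or.inl h) hphase

theorem target_mem_bigAgents (h : (bigAgents α g ∩ s.unserved).Nonempty) :
    target α s g ∈ bigAgents α g := by
  rw [target, if_pos h]
  exact (mem_inter.1 (argminOn_mem h)).1

theorem target_of_not_alarm (hU : s.unserved = ∅) (h : ¬ Alarm α s g) :
    target α s g = argminOn s.received univ := by
  simp [target, hU, h]

theorem target_of_alarm (hU : s.unserved = ∅) (h : Alarm α s g) :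
    target α s g = argminOn (s.observe α g).slack (bigAgents α g) := by
  simp [target, hU, h]

theorem target_spec_of_alarm (hL : LadderOn univ s.slack) (hU : s.unserved = ∅)
    (ha : Alarm α s g) :
    target α s g ∈ bigAgents α g ∧ (s.observe α g).slack (target α s g) < n - 1 ∧
      ∀ i ∈ bigAgents α g, (s.observe α g).slack (target α s g) ≤ (s.observe α g).slack i := by
  obtain ⟨j, hj, hjlow⟩ :=
    hL.exists_lt_of_not (fun i hi => Counts.slack_observe_of_not_mem _ _ hi) ha
  rw [target_of_alarm α hU ha]
  refine ⟨argminOn_mem ⟨j, hj⟩, ?_, fun i hi => argminOn_le hi⟩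
  simpa using (argminOn_le hj).trans_lt hjlow

theorem ladderOn_slack_step (hL : LadderOn univ s.slack) (hU : s.unserved = ∅) :
    LadderOn univ (step α s g).slack := by
  by_cases ha : Alarm α s g
  · obtain ⟨hbig, -, hmin⟩ := target_spec_of_alarm α hL hU ha
    refine hL.of_lift_min (fun i hi => Counts.slack_observe_of_not_mem _ _ hi)
      (fun i => Counts.slack_sub_one_le_slack_observe _ _ i) hmin
      (fun i hi => (Counts.slack_give_of_ne _ _ hi).ge) ?_
    have := hL.nonneg (mem_univ (target α s g))
    have := (s.observe α g).slack_give_of_mem g hbig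
      ((Counts.slack_sub_one_le_slack_observe _ _ _).trans' (by linarith))
    have := NeZero.pos n
    simp only [Fintype.card_fin]
    unfold step
    omega
  · refine (not_not.1 ha).mono fun i _ => ?_
    rcases eq_or_ne i (target α s g) with rfl | hi
    · exact Counts.slack_le_slack_give _ _
    · exact (Counts.slack_give_of_ne _ _ hi).ge

end Run

section Phase

variable {n : ℕ}

/-- During the first `n` slots each slot serves a fresh agent. One that does not get credited is
the `k`-th uncredited agent, `k = #uncredited`, and has seen at most `#credited` big goods so far;
so at any later time `T` it has seen at most `T - 1 - k` of them. -/
structure PhaseInv (s : Counts n) (T : ℕ) : Prop where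
  card_unserved : #s.unserved + T = n
  card_served : #s.uncredited + #s.credited = T
  seenBig_le : ∀ i ∈ s.unserved, s.seenBig i ≤ #s.credited
  ladderOn : LadderOn s.uncredited fun i => T - 1 - s.seenBig i

namespace PhaseInv

variable {α : Fin n → ℝ} {s : Counts n} {T : ℕ} {g : Fin n → NNReal} {w : Fin n}

theorem give_of_mem (h : PhaseInv s T) (hwU : w ∈ s.unserved) (hb0 : s.receivedBig w = 0)
    (hbig : w ∈ bigAgents α g) : PhaseInv ((s.observe α g).give α g w) (T + 1) := by
  have hC : ((s.observe α g).give α g w).credited = insert w s.credited :=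
    (s.observe α g).credited_give_of_mem g hbig
  have hwC : w ∉ s.credited := by simp [Counts.credited, hb0]
  have hU : ((s.observe α g).give α g w).unserved = s.unserved.erase w :=
    (s.observe α g).unserved_give g
  have hZ : ((s.observe α g).give α g w).uncredited = s.uncredited :=
    (s.observe α g).uncredited_give_of_mem g (mem_filter.1 hwU).2 hbig
  refine ⟨?_, ?_, fun i hi => ?_, hZ ▸ h.ladderOn.mono fun i _ => ?_⟩
  · rw [hU, card_erase_of_mem hwU]
    have := h.card_unserved
    have := card_pos.2 ⟨w, hwU⟩
    omega
  · rw [hZ, hC, card_insert_of_notMem hwC, ← h.card_served]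
    rfl
  · rw [hC, card_insert_of_notMem hwC]
    have := h.seenBig_le i (mem_of_mem_erase (hU ▸ hi))
    change s.seenBig i + _ ≤ _
    split_ifs <;> omega
  · change _ ≤ (T + 1 : ℕ) - 1 - ((s.seenBig i + _ : ℕ) : ℤ)
    split_ifs <;> push_cast <;> omega

theorem give_of_not_mem (h : PhaseInv s T) (hwU : w ∈ s.unserved) (hb0 : s.receivedBig w = 0)
    (hbig : w ∉ bigAgents α g) (hsmall : ∀ i ∈ s.unserved, i ∉ bigAgents α g) :
    PhaseInv ((s.observe α g).give α g w) (T + 1) := by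
  have hw0 : s.received w = 0 := (mem_filter.1 hwU).2
  have hwZ : w ∉ s.uncredited := by simp [Counts.uncredited, hw0]
  have hU : ((s.observe α g).give α g w).unserved = s.unserved.erase w :=
    (s.observe α g).unserved_give g
  have hseen (i : Fin n) (hi : i ∉ bigAgents α g) :
      ((s.observe α g).give α g w).seenBig i = s.seenBig i := by
    simp [Counts.give, Counts.observe, hi]
  have hC : ((s.observe α g).give α g w).credited = s.credited :=
    (s.observe α g).credited_give_of_not_mem g hbig
  have hZ : ((s.observe α g).give α g w).uncredited = insert w s.uncredited :=
    (s.observe α g).uncredited_give_of_not_mem g hw0 hb0 hbig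
  refine ⟨?_, ?_, fun i hi => ?_, ?_⟩
  · rw [hU, card_erase_of_mem hwU]
    have := h.card_unserved
    have := card_pos.2 ⟨w, hwU⟩
    omega
  · rw [hZ, hC, card_insert_of_notMem hwZ, ← h.card_served]
    ring
  · have hi' := mem_of_mem_erase (hU ▸ hi)
    rw [hC, hseen i (hsmall i hi')]
    exact h.seenBig_le i hi'
  · rw [hZ]
    refine (h.ladderOn.mono fun i _ => ?_).insert ?_
    · change _ ≤ (T + 1 : ℕ) - 1 - ((s.seenBig i + _ : ℕ) : ℤ)
      split_ifs <;> push_cast <;> omega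
    · rw [hseen w hbig]
      have := h.seenBig_le w hwU
      have := h.card_served
      push_cast
      omega

end PhaseInv

variable (α : Fin n → ℝ) [NeZero n] (v : ℕ → Fin n → NNReal)

theorem phaseInv_succ {T : ℕ} (h : PhaseInv (state α v T) T) (hT : T < n) :
    PhaseInv (state α v (T + 1)) (T + 1) := by
  set s := state α v T
  have hwU : target α s (v T) ∈ s.unserved :=
    target_mem_unserved α (card_pos.1 (by have := h.card_unserved; omega))
  have hb0 : s.receivedBig (target α s (v T)) = 0 :=
    Nat.le_zero.1 ((mem_filter.1 hwU).2 ▸ receivedBig_state_le α v _ T)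
  rw [state_succ]
  by_cases hbig : target α s (v T) ∈ bigAgents α (v T)
  · exact h.give_of_mem hwU hb0 hbig
  · exact h.give_of_not_mem hwU hb0 hbig fun i hi hib =>
      hbig (target_mem_bigAgents α ⟨i, mem_inter.2 ⟨hib, hi⟩⟩)

theorem phaseInv_state {T : ℕ} (hT : T ≤ n) : PhaseInv (state α v T) T := by
  induction T with
  | zero =>
    exact ⟨by simp [state, Counts.unserved], by simp [state, Counts.uncredited, Counts.credited],
      fun i _ => by simp [state], by simp [state, Counts.uncredited, LadderOn]⟩
  | succ T ih => exact phaseInv_succ α v (ih (by omega)) (by omega)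

end Phase

section AfterPhase

variable {n : ℕ} (α : Fin n → ℝ) [NeZero n] (v : ℕ → Fin n → NNReal)

theorem unserved_state_eq_empty {T : ℕ} (hT : n ≤ T) : (state α v T).unserved = ∅ := by
  have h0 : (state α v n).unserved = ∅ :=
    card_eq_zero.1 (by have := (phaseInv_state α v le_rfl).card_unserved; omega)
  refine eq_empty_of_forall_notMem fun i hi => ?_
  have hi0 : i ∉ (state α v n).unserved := h0 ▸ notMem_empty i
  simp only [Counts.unserved, mem_filter, mem_univ, true_and] at hi hi0
  have : (state α v n).received i ≤ (state α v T).received i := monotone_received_state α v i hT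
  omega

theorem ladderOn_slack_state {T : ℕ} (hT : n ≤ T) : LadderOn univ (state α v T).slack := by
  induction T, hT using Nat.le_induction with
  | base =>
    refine ((phaseInv_state α v le_rfl).ladderOn.mono fun i hi => ?_).univ_of_card_sub_one_le
      fun i hi => ?_
    · simp [Counts.slack, (mem_filter.1 hi).2.2]
    · have hU : i ∉ (state α v n).unserved := unserved_state_eq_empty α v le_rfl ▸ notMem_empty i
      have hb : (state α v n).receivedBig i ≠ 0 := fun hb =>
        hi (by simp_all [Counts.unserved, Counts.uncredited])
      have := seenBig_state_le α v i n
      have := NeZero.pos n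
      simp only [Counts.slack, hb, if_false, Fintype.card_fin]
      have : (1 : ℤ) ≤ (state α v n).receivedBig i := by omega
      nlinarith
  | succ T hT ih =>
    rw [state_succ]
    exact ladderOn_slack_step α ih (unserved_state_eq_empty α v hT)

theorem seenBig_state_le_mul (i : Fin n) (T : ℕ) (h : n ≤ (state α v T).seenBig i) :
    (state α v T).seenBig i ≤ (4 * n - 3) * (state α v T).receivedBig i := by
  have hslack := (ladderOn_slack_state α v (h.trans (seenBig_state_le α v i T))).nonneg (mem_univ i)
  unfold Counts.slack at hslack
  split_ifs at hslack with hb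
  · omega
  · have := NeZero.pos n
    zify [show 3 ≤ 4 * n by omega]
    linarith

theorem slack_state_sub_le {T T' : ℕ} (h : T ≤ T') (i : Fin n) :
    (state α v T).slack i - (T' - T : ℕ) ≤ (state α v T').slack i := by
  induction T', h using Nat.le_induction with
  | base => simp
  | succ T' hT ih =>
    have hstep : (state α v T').slack i - 1 ≤ (state α v (T' + 1)).slack i := by
      rw [state_succ]
      rcases eq_or_ne i (target α (state α v T') (v T')) with rfl | hi
      · exact (Counts.slack_sub_one_le_slack_observe _ _ _).trans (Counts.slack_le_slack_give _ _)
      · rw [step, Counts.slack_give_of_ne _ _ hi]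
        exact Counts.slack_sub_one_le_slack_observe _ _ _
    push_cast [Nat.sub_add_comm hT] at ih ⊢
    linarith

/-- An alarm target is lifted to slack `3n - 3`, which the next `2n - 2` slots cannot bring below
the level `n - 1` needed to make it the target of another alarm. -/
theorem alarm_targets_far {u₁ u₂ : ℕ} (hn : n ≤ u₁) (hu : u₁ < u₂)
    (ha₁ : Alarm α (state α v u₁) (v u₁)) (ha₂ : Alarm α (state α v u₂) (v u₂))
    (heq : target α (state α v u₁) (v u₁) = target α (state α v u₂) (v u₂)) :
    2 * n - 1 ≤ u₂ - u₁ := by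
  set x := target α (state α v u₁) (v u₁)
  obtain ⟨hx, -, -⟩ := target_spec_of_alarm α (ladderOn_slack_state α v hn)
    (unserved_state_eq_empty α v hn) ha₁
  have hlift : 3 * n - 3 ≤ (state α v (u₁ + 1)).slack x := by
    rw [state_succ]
    refine Counts.slack_give_of_mem _ _ hx ?_
    have := (ladderOn_slack_state α v hn).nonneg (mem_univ x)
    linarith [Counts.slack_sub_one_le_slack_observe (α := α) (state α v u₁) (v u₁) x]
  have hdecay := slack_state_sub_le α v (show u₁ + 1 ≤ u₂ from hu) x
  obtain ⟨-, hlow, -⟩ := target_spec_of_alarm α (ladderOn_slack_state α v (hn.trans hu.le))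
    (unserved_state_eq_empty α v (hn.trans hu.le)) ha₂
  rw [← heq] at hlow
  have := Counts.slack_sub_one_le_slack_observe (α := α) (state α v u₂) (v u₂) x
  omega

theorem received_lt_of_quiet {u₁ u₂ : ℕ} (hn : n ≤ u₂) (hu : u₁ < u₂)
    (hq : ¬ Alarm α (state α v u₂) (v u₂))
    (heq : target α (state α v u₁) (v u₁) = target α (state α v u₂) (v u₂)) (z : Fin n) :
    (state α v u₁).received (target α (state α v u₁) (v u₁)) < (state α v u₂).received z := by
  have hmin :
      (state α v u₂).received (target α (state α v u₂) (v u₂)) ≤ (state α v u₂).received z := by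
    rw [target_of_not_alarm α (unserved_state_eq_empty α v hn) hq]
    exact argminOn_le (mem_univ z)
  have := monotone_received_state α v (target α (state α v u₁) (v u₁)) (Nat.succ_le_of_lt hu)
  simp only [received_state_target] at this
  rw [← heq] at hmin
  omega

/-- `z` is never served in the window, so each other agent is the target of at most one alarm
and of at most one quiet slot there. -/
theorem card_window_le {u₀ T m : ℕ} {z : Fin n} (hn : n ≤ u₀) (hlen : T - u₀ ≤ 2 * n - 1)
    (hfloor : ∀ u ∈ Ico u₀ T, ∀ x, m ≤ (state α v u).received x)
    (hz : (state α v T).received z ≤ m) : T - u₀ ≤ 2 * (n - 1) := by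
  let f (u : ℕ) : Fin n × Bool :=
    (target α (state α v u) (v u), decide (Alarm α (state α v u) (v u)))
  have hmaps : Set.MapsTo f (Ico u₀ T) (univ.erase z ×ˢ univ : Finset (Fin n × Bool)) := by
    intro u hu
    rw [coe_Ico, Set.mem_Ico] at hu
    simp only [f, coe_product, Set.mem_prod, coe_erase, coe_univ, Set.mem_sdiff, Set.mem_univ,
      Set.mem_singleton_iff, true_and, and_true]
    intro hzu
    have := received_state_target α v u
    have := monotone_received_state α v z (show u + 1 ≤ T from hu.2)
    have := hfloor u (mem_Ico.2 hu) z
    simp only [hzu] at *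
    omega
  have hne : ∀ u₁ ∈ Ico u₀ T, ∀ u₂ ∈ Ico u₀ T, u₁ < u₂ → f u₁ ≠ f u₂ := by
    intro u₁ hu₁ u₂ hu₂ hlt hf
    rw [mem_Ico] at hu₁ hu₂
    simp only [f, Prod.ext_iff, decide_eq_decide] at hf
    by_cases ha : Alarm α (state α v u₂) (v u₂)
    · have := alarm_targets_far α v (hn.trans hu₁.1) hlt (hf.2.2 ha) ha hf.1
      omega
    · have := received_lt_of_quiet α v (hn.trans hu₂.1) hlt ha hf.1 z
      have := hfloor u₁ (mem_Ico.2 hu₁) (target α (state α v u₁) (v u₁))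
      have : (state α v u₂).received z ≤ (state α v T).received z :=
        monotone_received_state α v z hu₂.2.le
      omega
  have := card_le_card_of_injOn f hmaps fun u₁ hu₁ u₂ hu₂ hf => by
    rcases lt_trichotomy u₁ u₂ with h | h | h
    · exact absurd hf (hne u₁ hu₁ u₂ hu₂ h)
    · exact h
    · exact absurd hf.symm (hne u₂ hu₂ u₁ hu₁ h)
  simpa [card_product, card_erase_of_mem, mul_comm] using this

theorem le_mul_received_state_add (T : ℕ) (z : Fin n) :
    T ≤ (2 * n - 1) * (state α v T).received z + (n - 1) := by
  induction T using Nat.strong_induction_on generalizing z with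
  | _ T ih =>
  by_contra! hT
  generalize hmz : (state α v T).received z = m at hT
  have hm : 1 ≤ m := by
    have hz : z ∉ (state α v T).unserved :=
      unserved_state_eq_empty α v (show n ≤ T by omega) ▸ notMem_empty z
    simp only [Counts.unserved, mem_filter, mem_univ, true_and] at hz
    omega
  have hfloor : ∀ u ∈ Ico (T - (2 * n - 1)) T, ∀ x, m ≤ (state α v u).received x := by
    intro u hu x
    by_contra! hx
    have := ih u (mem_Ico.1 hu).2 x
    have := Nat.mul_le_mul_left (2 * n - 1) (Nat.succ_le_of_lt hx)
    rw [mem_Ico] at hu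
    rw [Nat.mul_succ] at this
    omega
  have := Nat.le_mul_of_pos_right (2 * n - 1) hm
  have hpost : n ≤ T - (2 * n - 1) := by omega
  have := card_window_le α v hpost (by omega) hfloor hmz.le
  have := NeZero.pos n
  omega

end AfterPhase

end OnlineMMS

/-- There is a deterministic online allocation algorithm such that, on every personalized
interval-restricted stream, every agent `i` gets at every time step at least a
`1/(√(α i)·(2n−1))` fraction of its maximin share, improving to `1/(4√(α i))` once `i` has seen
at least `n` goods of value above `√(α i)`. -/
theorem statement17 (n : ℕ) (hn : 1 ≤ n) (α : Fin n → ℝ) (hα : ∀ i, 1 < α i) :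
    ∃ F : List (Fin n → NNReal) → Fin n,
      ∀ v : ℕ → Fin n → NNReal,
        (∀ (t : ℕ) (i : Fin n), 1 ≤ (v t i : ℝ) ∧ (v t i : ℝ) ≤ α i) →
        ∀ (i : Fin n) (T : ℕ),
          mmsN n (Finset.range T) (fun t => (v t i : ℝ)) /
              (Real.sqrt (α i) * (2 * (n : ℝ) - 1)) ≤
            bval n v i (bundle n F v i T) ∧
          (n ≤ ((Finset.range T).filter fun t => Real.sqrt (α i) < (v t i : ℝ)).card →
            mmsN n (Finset.range T) (fun t => (v t i : ℝ)) / (4 * Real.sqrt (α i)) ≤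
              bval n v i (bundle n F v i T)) := by
  have : NeZero n := ⟨by omega⟩
  refine ⟨OnlineMMS.algorithm α, fun v hv i T => ?_⟩
  have hrate := OnlineMMS.le_mul_received_state_add α v T i
  have hquota := OnlineMMS.seenBig_state_le_mul α v i T
  rw [OnlineMMS.received_state_eq_card] at hrate
  rw [OnlineMMS.seenBig_state_eq_card, OnlineMMS.receivedBig_state_eq_card] at hquota
  exact OnlineMMS.mmsN_div_le_of_rate_of_quota (hα i) (fun t => hv t i) hrate hquota
end
end
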